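/- arXiv:1310.2321 — 2 statements merged into one kernel-verified Lean document; each statement's English description precedes it below -/
import Mathlib

section
/- Fix s, ε, τ ∈ ℝ with τ > 0, ε > 0, and let K, ρ, σ satisfy ρ > 0, σ ∈ ℝ, and 0 < K ≤ min(√(3/(128 ε ρ⁴ (1 + 4|σ|ρ⁴))), 1). Define ψ(x,t) = K(ρ² - |x-y|²)² h(t) on B_ρ(y) × [s-ε, s+ε/3], where h(t) = 1 - (t-s+ε)/(2ε). Then for all such (x,t), with r = |x-y|: Δ∞ψ + σ|Dψ|⁴ - 3∂ψ/∂t ≥ K(ρ²-r²)²(3/(2ε) - 64K²ρ⁴(1 + 4|σ|ρ⁴)) ≥ 0. -/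
open Real Set

/-- Partial derivative of `u` in the `i`-th coordinate direction. -/
noncomputable def pd {n : ℕ} (u : (Fin n → ℝ) → ℝ) (i : Fin n) (x : Fin n → ℝ) : ℝ :=
  fderiv ℝ u x (Pi.single i 1)

/-- The infinity-Laplacian `Δ∞ u = Σ_{i,j} u_{x_i} u_{x_j} u_{x_i x_j}`. -/
noncomputable def infLap {n : ℕ} (u : (Fin n → ℝ) → ℝ) (x : Fin n → ℝ) : ℝ :=
  ∑ i, ∑ j, pd u i x * pd u j x * pd (pd u i) j x

/-- Squared Euclidean norm of the spatial gradient: `|Du|² = Σ_i (∂u/∂x_i)²`. -/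
noncomputable def gradSq {n : ℕ} (u : (Fin n → ℝ) → ℝ) (x : Fin n → ℝ) : ℝ :=
  ∑ i, (pd u i x)^2

/-- Squared Euclidean norm on `Fin n → ℝ`. -/
noncomputable def normSq {n : ℕ} (x : Fin n → ℝ) : ℝ := ∑ i, (x i)^2

/-!
Writing `R = |x - y|²` and `g = ρ² - R`, the function `ψ(·, t)` is `φ(R)` with
`φ(R) = K h(t) (ρ² - R)²`, and for a function of `R` the chain rule gives
`Δ∞ψ = 16 φ'² φ'' R² + 8 φ'³ R` and `|Dψ|² = 4 φ'² R`. With `a = K h(t) ∈ [0, K]` this is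
`Δ∞ψ + σ|Dψ|⁴ = 64 a³ g² R (2R - g) + 256 σ a⁴ g⁴ R²`, while `-3 ∂ψ/∂t = 3 K g² / (2ε)`.
Since `R (ρ² - 3R) ≤ ρ⁴` and `g, R ≤ ρ²`, the spatial part is at least
`-64 K³ g² ρ⁴ (1 + 4|σ|ρ⁴)`, and the choice of `K` makes the total nonnegative.
-/

lemma pd_eq_of_hasFDerivAt {n : ℕ} {u : (Fin n → ℝ) → ℝ} {L : (Fin n → ℝ) →L[ℝ] ℝ}
    {x : Fin n → ℝ} (hu : HasFDerivAt u L x) (i : Fin n) : pd u i x = L (Pi.single i 1) := by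
  rw [pd, hu.fderiv]

section Radial

variable {n : ℕ} (y : Fin n → ℝ)

noncomputable def normSqSubDeriv (x : Fin n → ℝ) : (Fin n → ℝ) →L[ℝ] ℝ :=
  ∑ i, (2 * (x i - y i)) • ContinuousLinearMap.proj (R := ℝ) (φ := fun _ : Fin n => ℝ) i

lemma normSqSubDeriv_single (x : Fin n → ℝ) (j : Fin n) :
    normSqSubDeriv y x (Pi.single j 1) = 2 * (x j - y j) := by
  simp [normSqSubDeriv, Pi.single_apply]

lemma hasFDerivAt_coord_sub (x : Fin n → ℝ) (i : Fin n) :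
    HasFDerivAt (fun x' : Fin n → ℝ => x' i - y i)
      (ContinuousLinearMap.proj (R := ℝ) (φ := fun _ : Fin n => ℝ) i) x :=
  (ContinuousLinearMap.proj (R := ℝ) (φ := fun _ : Fin n => ℝ) i).hasFDerivAt.sub_const (y i)

lemma hasFDerivAt_normSq_sub (x : Fin n → ℝ) :
    HasFDerivAt (fun x' => normSq (x' - y)) (normSqSubDeriv y x) x := by
  simp only [normSq, Pi.sub_apply]
  refine HasFDerivAt.fun_sum fun i _ => ?_
  simpa [pow_two, two_mul, add_smul] using
    (hasFDerivAt_coord_sub y x i).fun_mul (hasFDerivAt_coord_sub y x i)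

variable {φ φ' φ'' : ℝ → ℝ}

lemma pd_radial (hφ : ∀ r, HasDerivAt φ (φ' r) r) (i : Fin n) (x : Fin n → ℝ) :
    pd (fun x' => φ (normSq (x' - y))) i x = 2 * φ' (normSq (x - y)) * (x i - y i) := by
  refine (pd_eq_of_hasFDerivAt ((hφ _).comp_hasFDerivAt x (hasFDerivAt_normSq_sub y x)) i).trans ?_
  simp only [FunLike.coe_smul, Pi.smul_apply, normSqSubDeriv_single, smul_eq_mul]
  ring

lemma pd_pd_radial (hφ : ∀ r, HasDerivAt φ (φ' r) r) (hφ' : ∀ r, HasDerivAt φ' (φ'' r) r)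
    (i j : Fin n) (x : Fin n → ℝ) :
    pd (pd (fun x' => φ (normSq (x' - y))) i) j x =
      4 * φ'' (normSq (x - y)) * (x i - y i) * (x j - y j) +
        2 * φ' (normSq (x - y)) * if i = j then 1 else 0 := by
  have hpd : pd (fun x' => φ (normSq (x' - y))) i =
      fun x' => 2 * φ' (normSq (x' - y)) * (x' i - y i) :=
    funext (pd_radial y hφ i)
  have hφ'R := ((hφ' _).comp_hasFDerivAt x (hasFDerivAt_normSq_sub y x)).const_mul 2
  rw [hpd]
  refine (pd_eq_of_hasFDerivAt (hφ'R.fun_mul (hasFDerivAt_coord_sub y x i)) j).trans ?_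
  simp only [FunLike.coe_add, Pi.add_apply, FunLike.coe_smul, Pi.smul_apply,
    normSqSubDeriv_single, ContinuousLinearMap.proj_apply, Pi.single_apply, smul_eq_mul,
    Function.comp_apply]
  split_ifs with hij <;> simp [hij] <;> ring

lemma gradSq_radial (hφ : ∀ r, HasDerivAt φ (φ' r) r) (x : Fin n → ℝ) :
    gradSq (fun x' => φ (normSq (x' - y))) x =
      4 * φ' (normSq (x - y)) ^ 2 * normSq (x - y) := by
  simp only [gradSq, pd_radial y hφ]
  simp only [normSq, Pi.sub_apply, Finset.mul_sum]
  exact Finset.sum_congr rfl fun i _ => by ring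

lemma infLap_radial (hφ : ∀ r, HasDerivAt φ (φ' r) r) (hφ' : ∀ r, HasDerivAt φ' (φ'' r) r)
    (x : Fin n → ℝ) :
    infLap (fun x' => φ (normSq (x' - y))) x =
      16 * φ' (normSq (x - y)) ^ 2 * φ'' (normSq (x - y)) * normSq (x - y) ^ 2 +
        8 * φ' (normSq (x - y)) ^ 3 * normSq (x - y) := by
  simp only [infLap, pd_radial y hφ, pd_pd_radial y hφ hφ']
  have hR : normSq (x - y) = ∑ i, (x i - y i) ^ 2 := rfl
  set A := φ' (normSq (x - y))
  set B := φ'' (normSq (x - y))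
  simp only [mul_add, Finset.sum_add_distrib, mul_ite, mul_one, mul_zero, Finset.sum_ite_eq,
    Finset.mem_univ, if_true]
  rw [hR, sq (∑ i, _), Finset.sum_mul_sum, Finset.mul_sum, Finset.mul_sum]
  congr 1
  · simp only [Finset.mul_sum]
    exact Finset.sum_congr rfl fun i _ => Finset.sum_congr rfl fun j _ => by ring
  · exact Finset.sum_congr rfl fun i _ => by ring

end Radial

lemma hasDerivAt_bumpProfile (a ρ r : ℝ) :
    HasDerivAt (fun r => a * (ρ ^ 2 - r) ^ 2) (-(2 * a * (ρ ^ 2 - r))) r := by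
  refine ((((hasDerivAt_id' r).const_sub (ρ ^ 2)).pow 2).const_mul a).congr_deriv ?_
  ring

lemma hasDerivAt_bumpProfile_deriv (a ρ r : ℝ) :
    HasDerivAt (fun r => -(2 * a * (ρ ^ 2 - r))) (2 * a) r := by
  refine (((hasDerivAt_id' r).const_sub (ρ ^ 2)).const_mul (2 * a)).fun_neg.congr_deriv ?_
  ring

lemma neg_pow_mul_le_pow_mul_quadratic {a K ρ R : ℝ} (ha : 0 ≤ a) (haK : a ≤ K) :
    -(K ^ 3 * ρ ^ 4) ≤ a ^ 3 * (R * (3 * R - ρ ^ 2)) := by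
  have hquad : -ρ ^ 4 ≤ R * (3 * R - ρ ^ 2) := by nlinarith [sq_nonneg (6 * R - ρ ^ 2)]
  have hcube : a ^ 3 ≤ K ^ 3 := pow_le_pow_left₀ ha haK 3
  have hK3 : 0 ≤ K ^ 3 := pow_nonneg (ha.trans haK) 3
  rcases le_total 0 (R * (3 * R - ρ ^ 2)) with hpos | hneg
  · exact (neg_nonpos.2 (by positivity)).trans (mul_nonneg (pow_nonneg ha 3) hpos)
  · calc -(K ^ 3 * ρ ^ 4) = K ^ 3 * -ρ ^ 4 := by ring
      _ ≤ K ^ 3 * (R * (3 * R - ρ ^ 2)) := mul_le_mul_of_nonneg_left hquad hK3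
      _ ≤ a ^ 3 * (R * (3 * R - ρ ^ 2)) := mul_le_mul_of_nonpos_right hcube hneg

lemma neg_abs_mul_le_mul_pow_mul {a K σ g R ρ : ℝ} (ha : 0 ≤ a) (haK : a ≤ K) (hK : K ≤ 1)
    (hg : 0 ≤ g) (hR : 0 ≤ R) (hgR : g + R = ρ ^ 2) :
    -(|σ| * K ^ 3 * ρ ^ 8) ≤ σ * (a ^ 4 * g ^ 2 * R ^ 2) := by
  have hpow : a ^ 4 ≤ K ^ 3 :=
    (pow_le_pow_left₀ ha haK 4).trans (pow_le_pow_of_le_one (ha.trans haK) hK (by norm_num))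
  have hgR' : g ^ 2 * R ^ 2 ≤ ρ ^ 8 := by
    have : g * R ≤ ρ ^ 4 := by nlinarith
    calc g ^ 2 * R ^ 2 = (g * R) ^ 2 := by ring
      _ ≤ (ρ ^ 4) ^ 2 := pow_le_pow_left₀ (mul_nonneg hg hR) this 2
      _ = ρ ^ 8 := by ring
  have hprod : a ^ 4 * (g ^ 2 * R ^ 2) ≤ K ^ 3 * ρ ^ 8 :=
    mul_le_mul hpow hgR' (by positivity) (pow_nonneg (ha.trans haK) 3)
  calc -(|σ| * K ^ 3 * ρ ^ 8) ≤ -(|σ| * (a ^ 4 * (g ^ 2 * R ^ 2))) := by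
        rw [mul_assoc]; exact neg_le_neg (mul_le_mul_of_nonneg_left hprod (abs_nonneg σ))
    _ ≤ σ * (a ^ 4 * g ^ 2 * R ^ 2) := by
        rw [← mul_assoc (a ^ 4), ← neg_mul]
        exact mul_le_mul_of_nonneg_right (neg_abs_le σ) (by positivity)

lemma infLap_add_mul_gradSq_sq_bump_ge {n : ℕ} (y x : Fin n → ℝ) {a K ρ σ : ℝ} (ha : 0 ≤ a)
    (haK : a ≤ K) (hK : K ≤ 1) (hx : normSq (x - y) ≤ ρ ^ 2) :
    -(64 * K ^ 3 * ρ ^ 4 * (1 + 4 * |σ| * ρ ^ 4) * (ρ ^ 2 - normSq (x - y)) ^ 2) ≤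
      infLap (fun x' => a * (ρ ^ 2 - normSq (x' - y)) ^ 2) x +
        σ * gradSq (fun x' => a * (ρ ^ 2 - normSq (x' - y)) ^ 2) x ^ 2 := by
  rw [infLap_radial y (hasDerivAt_bumpProfile a ρ) (hasDerivAt_bumpProfile_deriv a ρ),
    gradSq_radial y (hasDerivAt_bumpProfile a ρ)]
  have hR : 0 ≤ normSq (x - y) := Finset.sum_nonneg fun i _ => sq_nonneg _
  set R := normSq (x - y)
  have h₁ := mul_le_mul_of_nonneg_left (neg_pow_mul_le_pow_mul_quadratic (R := R) (ρ := ρ) ha haK)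
    (sq_nonneg (ρ ^ 2 - R))
  have h₂ := mul_le_mul_of_nonneg_left
    (neg_abs_mul_le_mul_pow_mul (σ := σ) ha haK hK (sub_nonneg.2 hx) hR (sub_add_cancel _ _))
    (sq_nonneg (ρ ^ 2 - R))
  linarith

lemma one_sub_div_mem_Icc {s ε t : ℝ} (hε : 0 < ε) (ht : t ∈ Icc (s - ε) (s + ε)) :
    1 - (t - s + ε) / (2 * ε) ∈ Icc 0 1 := by
  constructor
  · rw [sub_nonneg, div_le_one (by positivity)]
    linarith [ht.2]
  · rw [sub_le_self_iff]
    exact div_nonneg (by linarith [ht.1]) (by positivity)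

lemma hasDerivAt_one_sub_div (s ε t : ℝ) :
    HasDerivAt (fun t => 1 - (t - s + ε) / (2 * ε)) (-(2 * ε)⁻¹) t :=
  ((((hasDerivAt_id' t).sub_const s).add_const ε).div_const (2 * ε)).const_sub 1 |>.congr_deriv
    (by ring)

theorem stmt_13_general (n : ℕ) (s ε K ρ σ : ℝ) (y : Fin n → ℝ)
    (hε : 0 < ε) (hρ : 0 < ρ)
    (hK0 : 0 < K)
    (hK : K ≤ min (Real.sqrt (3 / (128 * ε * ρ^4 * (1 + 4 * |σ| * ρ^4)))) 1)
    (h : ℝ → ℝ) (hh : ∀ t, h t = 1 - (t - s + ε) / (2 * ε))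
    (ψ : (Fin n → ℝ) → ℝ → ℝ)
    (hψ : ∀ x t, ψ x t = K * (ρ^2 - normSq (x - y))^2 * h t) :
    ∀ (x : Fin n → ℝ) (t : ℝ), normSq (x - y) ≤ ρ^2 →
      t ∈ Icc (s - ε) (s + ε/3) →
      infLap (fun x' => ψ x' t) x + σ * (gradSq (fun x' => ψ x' t) x)^2 -
          3 * deriv (ψ x) t ≥
        K * (ρ^2 - normSq (x - y))^2 *
          (3 / (2 * ε) - 64 * K^2 * ρ^4 * (1 + 4 * |σ| * ρ^4)) ∧
      K * (ρ^2 - normSq (x - y))^2 *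
          (3 / (2 * ε) - 64 * K^2 * ρ^4 * (1 + 4 * |σ| * ρ^4)) ≥ 0 := by
  intro x t hx ht
  have hK1 : K ≤ 1 := hK.trans (min_le_right _ _)
  have hKε : 64 * K ^ 2 * ρ ^ 4 * (1 + 4 * |σ| * ρ ^ 4) ≤ 3 / (2 * ε) := by
    have hKsq := (Real.le_sqrt' hK0).1 (hK.trans (min_le_left _ _))
    rw [le_div_iff₀ (by positivity)] at hKsq ⊢
    linarith
  have hht : h t ∈ Icc 0 1 := hh t ▸ one_sub_div_mem_Icc hε ⟨ht.1, by linarith [ht.2]⟩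
  have hspace : (fun x' => ψ x' t) = fun x' => K * h t * (ρ ^ 2 - normSq (x' - y)) ^ 2 :=
    funext fun x' => by rw [hψ]; ring
  have htime : deriv (ψ x) t = K * (ρ ^ 2 - normSq (x - y)) ^ 2 * -(2 * ε)⁻¹ := by
    rw [funext (hψ x), funext hh]
    exact ((hasDerivAt_one_sub_div s ε t).const_mul _).deriv
  have hbound := infLap_add_mul_gradSq_sq_bump_ge y x (σ := σ) (mul_nonneg hK0.le hht.1)
    (mul_le_of_le_one_right hK0.le hht.2) hK1 hx
  refine ⟨?_, mul_nonneg (by positivity) (sub_nonneg.2 hKε)⟩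
  rw [hspace, htime]
  have hrate : K * (ρ ^ 2 - normSq (x - y)) ^ 2 * (3 / (2 * ε)) =
      3 * (K * (ρ ^ 2 - normSq (x - y)) ^ 2 * (2 * ε)⁻¹) := by ring
  linarith

theorem stmt_13 (n : ℕ) (s ε τ K ρ σ : ℝ) (y : Fin n → ℝ)
    (hτ : 0 < τ) (hε : 0 < ε) (hρ : 0 < ρ)
    (hK0 : 0 < K)
    (hK : K ≤ min (Real.sqrt (3 / (128 * ε * ρ^4 * (1 + 4 * |σ| * ρ^4)))) 1)
    (h : ℝ → ℝ) (hh : ∀ t, h t = 1 - (t - s + ε) / (2 * ε))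
    (ψ : (Fin n → ℝ) → ℝ → ℝ)
    (hψ : ∀ x t, ψ x t = K * (ρ^2 - normSq (x - y))^2 * h t) :
    ∀ (x : Fin n → ℝ) (t : ℝ), normSq (x - y) ≤ ρ^2 →
      t ∈ Icc (s - ε) (s + ε/3) →
      infLap (fun x' => ψ x' t) x + σ * (gradSq (fun x' => ψ x' t) x)^2 -
          3 * deriv (ψ x) t ≥
        K * (ρ^2 - normSq (x - y))^2 *
          (3 / (2 * ε) - 64 * K^2 * ρ^4 * (1 + 4 * |σ| * ρ^4)) ∧
      K * (ρ^2 - normSq (x - y))^2 *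
          (3 / (2 * ε) - 64 * K^2 * ρ^4 * (1 + 4 * |σ| * ρ^4)) ≥ 0 :=
  stmt_13_general n s ε K ρ σ y hε hρ hK0 hK h hh ψ hψ
end

section
/- Let 0 < ν < 1, c > 0, k > 0, Γ > 0, δ > 0, τ > 0 with c δ^ν = kτ ≤ Γ, and δ⁴ ≤ ν⁴ k² τ³ Γ / 3 (equivalently δ ≤ ν (k²τ³Γ/3)^{1/4}). Define for 0 < r ≤ δ the quantity E(r) = 3k + c³ν⁴ r^{3ν-4}(c r^ν - 2Γ). Then E(r) ≤ 3k - ν⁴ k³τ³ Γ/δ⁴ ≤ 0. -/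
/-! For `r ≤ δ` the bracket `c r^ν - 2Γ` is at most `-Γ`, because `c r^ν ≤ c δ^ν = kτ ≤ Γ`.
Since `3ν - 4 < 0`, the factor `r^(3ν-4)` is smallest at `r = δ`, where
`c³ δ^(3ν-4) = (c δ^ν)³ / δ⁴ = (kτ)³ / δ⁴`. The last inequality is the assumption on `δ⁴`
multiplied by `3k / δ⁴`. -/

open Real

theorem Real.rpow_natCast_mul_sub_natCast {x : ℝ} (hx : 0 < x) (y : ℝ) (n m : ℕ) :
    x ^ (n * y - m) = (x ^ y) ^ n / x ^ m := by
  rw [rpow_sub hx, mul_comm, rpow_mul_natCast hx.le, rpow_natCast]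

lemma mul_rpow_sub_two_mul_le_neg {c ν Γ r δ : ℝ} (hc : 0 ≤ c) (hν : 0 ≤ ν) (hr : 0 ≤ r)
    (hrδ : r ≤ δ) (hcδ : c * δ ^ ν ≤ Γ) : c * r ^ ν - 2 * Γ ≤ -Γ := by
  have : c * r ^ ν ≤ c * δ ^ ν := mul_le_mul_of_nonneg_left (rpow_le_rpow hr hrδ hν) hc
  linarith

lemma cusp_error_le {ν c Γ r δ : ℝ} (hν0 : 0 ≤ ν) (hν1 : ν ≤ 4 / 3) (hc : 0 ≤ c) (hΓ : 0 ≤ Γ)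
    (hr : 0 < r) (hrδ : r ≤ δ) (hcδ : c * δ ^ ν ≤ Γ) :
    c ^ 3 * ν ^ 4 * r ^ (3 * ν - 4) * (c * r ^ ν - 2 * Γ) ≤
      -(ν ^ 4 * (c * δ ^ ν) ^ 3 * Γ / δ ^ 4) := by
  have hδ : 0 < δ := hr.trans_le hrδ
  calc c ^ 3 * ν ^ 4 * r ^ (3 * ν - 4) * (c * r ^ ν - 2 * Γ)
      ≤ c ^ 3 * ν ^ 4 * r ^ (3 * ν - 4) * -Γ :=
        mul_le_mul_of_nonneg_left (mul_rpow_sub_two_mul_le_neg hc hν0 hr.le hrδ hcδ)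
          (by positivity)
    _ = -(c ^ 3 * ν ^ 4 * Γ * r ^ (3 * ν - 4)) := by ring
    _ ≤ -(c ^ 3 * ν ^ 4 * Γ * δ ^ (3 * ν - 4)) :=
        neg_le_neg <| mul_le_mul_of_nonneg_left
          (rpow_le_rpow_of_nonpos hr hrδ (by linarith)) (by positivity)
    _ = -(ν ^ 4 * (c * δ ^ ν) ^ 3 * Γ / δ ^ 4) := by
        rw [show 3 * ν - 4 = ((3 : ℕ) : ℝ) * ν - (4 : ℕ) by push_cast; ring,
          rpow_natCast_mul_sub_natCast hδ]
        ring

theorem stmt_17_general (ν c k Γ δ τ : ℝ)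
    (hν0 : 0 < ν) (hν1 : ν < 1) (hc : 0 < c) (hk : 0 < k) (hΓ : 0 < Γ)
    (hδ : 0 < δ)
    (h1 : c * δ ^ ν = k * τ) (h2 : k * τ ≤ Γ)
    (h3 : δ^4 ≤ ν^4 * k^2 * τ^3 * Γ / 3) :
    ∀ r : ℝ, 0 < r → r ≤ δ →
      3 * k + c^3 * ν^4 * r ^ (3 * ν - 4) * (c * r ^ ν - 2 * Γ) ≤
        3 * k - ν^4 * k^3 * τ^3 * Γ / δ^4 ∧
      3 * k - ν^4 * k^3 * τ^3 * Γ / δ^4 ≤ 0 := by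
  intro r hr hrδ
  have hE := cusp_error_le hν0.le (by linarith) hc.le hΓ.le hr hrδ (h1 ▸ h2)
  rw [h1, mul_pow, ← mul_assoc] at hE
  refine ⟨by linarith, ?_⟩
  have : 3 * k ≤ ν ^ 4 * k ^ 3 * τ ^ 3 * Γ / δ ^ 4 := by
    rw [le_div_iff₀ (by positivity)]
    nlinarith
  linarith

theorem stmt_17 (ν c k Γ δ τ : ℝ)
    (hν0 : 0 < ν) (hν1 : ν < 1) (hc : 0 < c) (hk : 0 < k) (hΓ : 0 < Γ)
    (hδ : 0 < δ) (hτ : 0 < τ)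
    (h1 : c * δ ^ ν = k * τ) (h2 : k * τ ≤ Γ)
    (h3 : δ^4 ≤ ν^4 * k^2 * τ^3 * Γ / 3) :
    ∀ r : ℝ, 0 < r → r ≤ δ →
      3 * k + c^3 * ν^4 * r ^ (3 * ν - 4) * (c * r ^ ν - 2 * Γ) ≤
        3 * k - ν^4 * k^3 * τ^3 * Γ / δ^4 ∧
      3 * k - ν^4 * k^3 * τ^3 * Γ / δ^4 ≤ 0 :=
  stmt_17_general ν c k Γ δ τ hν0 hν1 hc hk hΓ hδ h1 h2 h3
end
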